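/- Feasibility criterion: the constraint set { w Lipschitz on [0,s_f] : μ⁻ ≤ w ≤ μ⁺, α⁻ ≤ w' ≤ α⁺ a.e. } is nonempty if and only if M̄(μ⁺) ≥ μ⁻ pointwise. -/

import Mathlib

open MeasureTheory Set

/-- `A(y,x) = ∫_y^x α⁺` if `y ≤ x`, and `∫_x^y (−α⁻)` if `y > x`. -/
noncomputable def A2 (αp αm : ℝ → ℝ) (y x : ℝ) : ℝ :=
  if y ≤ x then ∫ t in y..x, αp t else ∫ t in x..y, (-αm t)

/-- The meet operator `M̄(w)(x) = inf_{y ∈ [0,s_f]} { w(y) + A(y,x) }`. -/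
noncomputable def Mbar (sf : ℝ) (αp αm : ℝ → ℝ) (w : ℝ → ℝ) : ℝ → ℝ :=
  fun x => sInf {z : ℝ | ∃ y ∈ Icc (0:ℝ) sf, z = w y + A2 αp αm y x}

/-!
`A` is a directed distance on `[0, s_f]`: the triangle inequality `A(z,x) ≤ A(z,y) + A(y,x)` holds
because `α⁻ ≤ 0 ≤ α⁺`. For Lipschitz `w`, the constraint `α⁻ ≤ w' ≤ α⁺` a.e. is equivalent to
`w x ≤ w y + A(y,x)` for all `x, y`: both say that `w - ∫ α⁻` and `∫ α⁺ - w` are nondecreasing,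
since an absolutely continuous function is monotone iff its derivative is a.e. nonnegative.
Hence a feasible `w` satisfies `μ⁻ ≤ w ≤ M̄(μ⁺)`. Conversely, by the triangle inequality
`M̄(μ⁺)` itself satisfies `w x ≤ w y + A(y,x)`, so it is Lipschitz and obeys the derivative
constraints; taking `y = x` in the infimum gives `M̄(μ⁺) ≤ μ⁺`, so it is feasible as soon as
`μ⁻ ≤ M̄(μ⁺)`.
-/

open Filter intervalIntegral

section

variable {a b x y z : ℝ} {f w : ℝ → ℝ}

lemma IntervalIntegrable.mono_of_mem_Icc (hf : IntervalIntegrable f volume a b)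
    (hx : x ∈ Icc a b) (hy : y ∈ Icc a b) : IntervalIntegrable f volume x y :=
  hf.mono_set (uIcc_subset_uIcc (Icc_subset_uIcc hx) (Icc_subset_uIcc hy))

lemma integral_nonneg_of_mem_Icc (hf : ∀ s ∈ Icc a b, 0 ≤ f s) (hx : x ∈ Icc a b)
    (hy : y ∈ Icc a b) (hxy : x ≤ y) : 0 ≤ ∫ t in x..y, f t :=
  integral_nonneg hxy fun _ ht => hf _ ⟨hx.1.trans ht.1, ht.2.trans hy.2⟩

lemma ae_derivWithin_Icc_eq_deriv (w : ℝ → ℝ) (a b : ℝ) :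
    ∀ᵐ s, s ∈ Icc a b → derivWithin w (Icc a b) s = deriv w s := by
  filter_upwards [Ioo_ae_eq_Icc (μ := volume) (a := a) (b := b)] with s hs hsI
  have hsIoo : s ∈ Ioo a b := hs.mpr hsI
  exact derivWithin_of_mem_nhds (Icc_mem_nhds hsIoo.1 hsIoo.2)

theorem AbsolutelyContinuousOnInterval.monotoneOn_iff_ae_nonneg {F φ : ℝ → ℝ}
    (hF : AbsolutelyContinuousOnInterval F a b)
    (hφ : ∀ᵐ s, s ∈ Icc a b → HasDerivAt F (φ s) s) :
    MonotoneOn F (Icc a b) ↔ ∀ᵐ s, s ∈ Icc a b → 0 ≤ φ s := by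
  constructor
  · intro hmono
    filter_upwards [hφ, ae_derivWithin_Icc_eq_deriv F a b] with s hs hs' hsI
    rw [← (hs hsI).deriv, ← hs' hsI]
    exact hmono.derivWithin_nonneg
  · intro hφ_nonneg x hx y hy hxy
    have hsub : uIcc x y ⊆ uIcc a b := uIcc_subset_uIcc (Icc_subset_uIcc hx) (Icc_subset_uIcc hy)
    rw [← sub_nonneg, ← (hF.mono hsub).integral_deriv_eq_sub]
    refine integral_nonneg_of_ae_restrict hxy ?_
    rw [EventuallyLE, ae_restrict_iff' measurableSet_Icc]
    filter_upwards [hφ, hφ_nonneg] with s hs hs' hsxy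
    have hsI : s ∈ Icc a b := ⟨hx.1.trans hsxy.1, hsxy.2.trans hy.2⟩
    simpa [(hs hsI).deriv] using hs' hsI

theorem AbsolutelyContinuousOnInterval.monotoneOn_integral_sub_iff (hab : a ≤ b)
    (hw : AbsolutelyContinuousOnInterval w a b) (hf : IntervalIntegrable f volume a b) :
    MonotoneOn (fun x => (∫ t in a..x, f t) - w x) (Icc a b) ↔
      ∀ᵐ s, s ∈ Icc a b → deriv w s ≤ f s := by
  have hderiv : ∀ᵐ s, s ∈ Icc a b →
      HasDerivAt (fun x => (∫ t in a..x, f t) - w x) (f s - deriv w s) s := by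
    filter_upwards [hw.ae_differentiableAt, hf.ae_hasDerivAt_integral] with s hws hfs hs
    rw [uIcc_of_le hab] at hws hfs
    exact (hfs hs a (left_mem_Icc.2 hab)).sub (hws hs).hasDerivAt
  have hac : AbsolutelyContinuousOnInterval (fun x => (∫ t in a..x, f t) - w x) a b :=
    (hf.absolutelyContinuousOnInterval_intervalIntegral left_mem_uIcc).sub hw
  simp_rw [hac.monotoneOn_iff_ae_nonneg hderiv, sub_nonneg]

theorem AbsolutelyContinuousOnInterval.monotoneOn_sub_integral_iff (hab : a ≤ b)
    (hw : AbsolutelyContinuousOnInterval w a b) (hf : IntervalIntegrable f volume a b) :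
    MonotoneOn (fun x => w x - ∫ t in a..x, f t) (Icc a b) ↔
      ∀ᵐ s, s ∈ Icc a b → f s ≤ deriv w s := by
  have hderiv : ∀ᵐ s, s ∈ Icc a b →
      HasDerivAt (fun x => w x - ∫ t in a..x, f t) (deriv w s - f s) s := by
    filter_upwards [hw.ae_differentiableAt, hf.ae_hasDerivAt_integral] with s hws hfs hs
    rw [uIcc_of_le hab] at hws hfs
    exact (hws hs).hasDerivAt.sub (hfs hs a (left_mem_Icc.2 hab))
  have hac : AbsolutelyContinuousOnInterval (fun x => w x - ∫ t in a..x, f t) a b :=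
    hw.sub (hf.absolutelyContinuousOnInterval_intervalIntegral left_mem_uIcc)
  simp_rw [hac.monotoneOn_iff_ae_nonneg hderiv, sub_nonneg]

section A2

variable {αp αm : ℝ → ℝ}

lemma A2_of_le (h : y ≤ x) : A2 αp αm y x = ∫ t in y..x, αp t := if_pos h

lemma A2_of_lt (h : x < y) : A2 αp αm y x = -∫ t in x..y, αm t := by
  rw [A2, if_neg h.not_ge, intervalIntegral.integral_neg]

lemma A2_self : A2 αp αm x x = 0 := by
  rw [A2_of_le le_rfl, integral_same]

lemma A2_nonneg (hp : ∀ s ∈ Icc a b, 0 ≤ αp s) (hm : ∀ s ∈ Icc a b, αm s ≤ 0)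
    (hx : x ∈ Icc a b) (hy : y ∈ Icc a b) : 0 ≤ A2 αp αm y x := by
  unfold A2
  split_ifs with h
  · exact integral_nonneg_of_mem_Icc hp hy hx h
  · exact integral_nonneg_of_mem_Icc (fun s hs => neg_nonneg.2 (hm s hs)) hx hy (not_le.1 h).le

lemma A2_eq_max (hp : ∀ s ∈ Icc a b, 0 ≤ αp s) (hm : ∀ s ∈ Icc a b, αm s ≤ 0)
    (hx : x ∈ Icc a b) (hy : y ∈ Icc a b) :
    A2 αp αm y x = max (∫ t in y..x, αp t) (∫ t in x..y, -αm t) := by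
  have hm' : ∀ s ∈ Icc a b, 0 ≤ -αm s := fun s hs => neg_nonneg.2 (hm s hs)
  unfold A2
  split_ifs with h
  · refine (max_eq_left ?_).symm
    rw [integral_symm]
    linarith [integral_nonneg_of_mem_Icc hp hy hx h, integral_nonneg_of_mem_Icc hm' hy hx h]
  · refine (max_eq_right ?_).symm
    rw [integral_symm]
    have h := (not_le.1 h).le
    linarith [integral_nonneg_of_mem_Icc hp hx hy h, integral_nonneg_of_mem_Icc hm' hx hy h]

lemma A2_le_A2_add_A2 (hp : ∀ s ∈ Icc a b, 0 ≤ αp s) (hm : ∀ s ∈ Icc a b, αm s ≤ 0)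
    (hip : IntervalIntegrable αp volume a b) (him : IntervalIntegrable αm volume a b)
    (hx : x ∈ Icc a b) (hy : y ∈ Icc a b) (hz : z ∈ Icc a b) :
    A2 αp αm z x ≤ A2 αp αm z y + A2 αp αm y x := by
  have himn : IntervalIntegrable (fun t => -αm t) volume a b := him.neg
  rw [A2_eq_max hp hm hx hz, A2_eq_max hp hm hy hz, A2_eq_max hp hm hx hy]
  refine max_le ?_ ?_
  · rw [← integral_add_adjacent_intervals (hip.mono_of_mem_Icc hz hy) (hip.mono_of_mem_Icc hy hx)]
    exact add_le_add (le_max_left _ _) (le_max_left _ _)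
  · rw [← integral_add_adjacent_intervals (himn.mono_of_mem_Icc hx hy)
      (himn.mono_of_mem_Icc hy hz), add_comm]
    exact add_le_add (le_max_right _ _) (le_max_right _ _)

lemma A2_le_mul_dist {Ca : ℝ} (hCa : ∀ s ∈ Icc a b, |αp s| ≤ Ca ∧ |αm s| ≤ Ca)
    (hx : x ∈ Icc a b) (hy : y ∈ Icc a b) : A2 αp αm y x ≤ Ca * dist x y := by
  have hbound : ∀ {u v} {g : ℝ → ℝ}, u ∈ Icc a b → v ∈ Icc a b → (∀ s ∈ Icc a b, |g s| ≤ Ca) →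
      ∫ t in u..v, g t ≤ Ca * |v - u| := fun hu hv hg =>
    (Real.le_norm_self _).trans <| norm_integral_le_of_norm_le_const fun _ ht =>
      hg _ (uIcc_subset_Icc hu hv (uIoc_subset_uIcc ht))
  rw [Real.dist_eq]
  unfold A2
  split_ifs
  · exact hbound hy hx fun s hs => (hCa s hs).1
  · rw [abs_sub_comm]
    exact hbound hx hy fun s hs => by simpa using (hCa s hs).2

lemma le_add_A2_iff_monotoneOn (hip : IntervalIntegrable αp volume a b)
    (him : IntervalIntegrable αm volume a b) :
    (∀ x ∈ Icc a b, ∀ y ∈ Icc a b, w x ≤ w y + A2 αp αm y x) ↔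
      MonotoneOn (fun x => w x - ∫ t in a..x, αm t) (Icc a b) ∧
        MonotoneOn (fun x => (∫ t in a..x, αp t) - w x) (Icc a b) := by
  have hsplit : ∀ {g : ℝ → ℝ}, IntervalIntegrable g volume a b → ∀ {x y}, x ∈ Icc a b →
      y ∈ Icc a b → (∫ t in a..y, g t) - ∫ t in a..x, g t = ∫ t in x..y, g t := by
    intro g hg x y hx hy
    have ha : a ∈ Icc a b := left_mem_Icc.2 (hx.1.trans hx.2)
    exact integral_interval_sub_left (hg.mono_of_mem_Icc ha hy) (hg.mono_of_mem_Icc ha hx)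
  constructor
  · intro h
    refine ⟨fun x hx y hy hxy => ?_, fun x hx y hy hxy => ?_⟩
    · rcases hxy.eq_or_lt with rfl | hlt
      · rfl
      have := h x hx y hy
      rw [A2_of_lt hlt] at this
      linarith [hsplit him hx hy]
    · have := h y hy x hx
      rw [A2_of_le hxy] at this
      linarith [hsplit hip hx hy]
  · rintro ⟨hmono_m, hmono_p⟩ x hx y hy
    rcases le_or_gt y x with hyx | hxy
    · rw [A2_of_le hyx]
      linarith [hmono_p hy hx hyx, hsplit hip hy hx]
    · rw [A2_of_lt hxy]
      linarith [hmono_m hx hy hxy.le, hsplit him hx hy]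

lemma lipschitzOnWith_of_le_add_A2 {Ca : ℝ} (hCa : ∀ s ∈ Icc a b, |αp s| ≤ Ca ∧ |αm s| ≤ Ca)
    (h : ∀ x ∈ Icc a b, ∀ y ∈ Icc a b, w x ≤ w y + A2 αp αm y x) :
    LipschitzOnWith (Real.toNNReal Ca) w (Icc a b) :=
  LipschitzOnWith.of_le_add_mul' Ca fun x hx y hy =>
    (h x hx y hy).trans (by gcongr; exact A2_le_mul_dist hCa hx hy)

theorem LipschitzOnWith.le_add_A2_iff_ae_derivWithin {K : NNReal} (hab : a ≤ b)
    (hw : LipschitzOnWith K w (Icc a b)) (hip : IntervalIntegrable αp volume a b)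
    (him : IntervalIntegrable αm volume a b) :
    (∀ x ∈ Icc a b, ∀ y ∈ Icc a b, w x ≤ w y + A2 αp αm y x) ↔
      ∀ᵐ s, s ∈ Icc a b → αm s ≤ derivWithin w (Icc a b) s ∧ derivWithin w (Icc a b) s ≤ αp s := by
  have hac : AbsolutelyContinuousOnInterval w a b :=
    LipschitzOnWith.absolutelyContinuousOnInterval (K := K) (by rwa [uIcc_of_le hab])
  rw [le_add_A2_iff_monotoneOn hip him, hac.monotoneOn_sub_integral_iff hab him,
    hac.monotoneOn_integral_sub_iff hab hip, ← eventually_and]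
  refine eventually_congr ?_
  filter_upwards [ae_derivWithin_Icc_eq_deriv w a b] with s hs
  by_cases hsI : s ∈ Icc a b <;> simp [hsI, hs]

end A2

section Mbar

variable {sf : ℝ} {αp αm : ℝ → ℝ}

lemma Mbar_le (hw : BddBelow (w '' Icc 0 sf)) (hp : ∀ s ∈ Icc (0:ℝ) sf, 0 ≤ αp s)
    (hm : ∀ s ∈ Icc (0:ℝ) sf, αm s ≤ 0) (hx : x ∈ Icc 0 sf) (hy : y ∈ Icc 0 sf) :
    Mbar sf αp αm w x ≤ w y + A2 αp αm y x := by
  obtain ⟨c, hc⟩ := hw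
  refine csInf_le ⟨c, ?_⟩ ⟨y, hy, rfl⟩
  rintro _ ⟨y', hy', rfl⟩
  linarith [hc (mem_image_of_mem w hy'), A2_nonneg hp hm hx hy']

lemma le_Mbar {c : ℝ} (hsf : 0 ≤ sf) (h : ∀ y ∈ Icc 0 sf, c ≤ w y + A2 αp αm y x) :
    c ≤ Mbar sf αp αm w x := by
  refine le_csInf ⟨_, 0, left_mem_Icc.2 hsf, rfl⟩ ?_
  rintro _ ⟨y, hy, rfl⟩
  exact h y hy

lemma Mbar_le_Mbar_add_A2 (hsf : 0 ≤ sf) (hw : BddBelow (w '' Icc 0 sf))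
    (hip : IntervalIntegrable αp volume 0 sf) (him : IntervalIntegrable αm volume 0 sf)
    (hp : ∀ s ∈ Icc (0:ℝ) sf, 0 ≤ αp s) (hm : ∀ s ∈ Icc (0:ℝ) sf, αm s ≤ 0)
    (hx : x ∈ Icc 0 sf) (hy : y ∈ Icc 0 sf) :
    Mbar sf αp αm w x ≤ Mbar sf αp αm w y + A2 αp αm y x := by
  suffices Mbar sf αp αm w x - A2 αp αm y x ≤ Mbar sf αp αm w y by linarith
  refine le_Mbar hsf fun z hz => ?_
  linarith [Mbar_le hw hp hm hx hz, A2_le_A2_add_A2 hp hm hip him hx hy hz]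

end Mbar

end

theorem stmt_17_general (sf Ca : ℝ) (hsf : 0 < sf) (αp αm μm μp : ℝ → ℝ) (Kμ : NNReal)
    (hip : IntervalIntegrable αp volume 0 sf)
    (him : IntervalIntegrable αm volume 0 sf)
    (hp : ∀ s ∈ Icc (0:ℝ) sf, 0 ≤ αp s)
    (hm : ∀ s ∈ Icc (0:ℝ) sf, αm s ≤ 0)
    (hCa : ∀ s ∈ Icc (0:ℝ) sf, |αp s| ≤ Ca ∧ |αm s| ≤ Ca)
    (hμp : LipschitzOnWith Kμ μp (Icc (0:ℝ) sf)) :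
    (∃ (w : ℝ → ℝ) (K : NNReal), LipschitzOnWith K w (Icc (0:ℝ) sf) ∧
      (∀ s ∈ Icc (0:ℝ) sf, μm s ≤ w s ∧ w s ≤ μp s) ∧
      (∀ᵐ s ∂volume, s ∈ Icc (0:ℝ) sf →
        αm s ≤ derivWithin w (Icc (0:ℝ) sf) s ∧
        derivWithin w (Icc (0:ℝ) sf) s ≤ αp s))
    ↔ (∀ s ∈ Icc (0:ℝ) sf, μm s ≤ Mbar sf αp αm μp s) := by
  constructor
  · rintro ⟨w, K, hw, hbounds, hderiv⟩ x hx
    have hwA := (hw.le_add_A2_iff_ae_derivWithin hsf.le hip him).2 hderiv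
    refine le_Mbar hsf.le fun y hy => ?_
    calc μm x ≤ w x := (hbounds x hx).1
      _ ≤ w y + A2 αp αm y x := hwA x hx y hy
      _ ≤ μp y + A2 αp αm y x := by gcongr; exact (hbounds y hy).2
  · intro hμm
    have hbdd : BddBelow (μp '' Icc 0 sf) := isCompact_Icc.bddBelow_image hμp.continuousOn
    have hA : ∀ x ∈ Icc 0 sf, ∀ y ∈ Icc 0 sf,
        Mbar sf αp αm μp x ≤ Mbar sf αp αm μp y + A2 αp αm y x := fun x hx y hy =>
      Mbar_le_Mbar_add_A2 hsf.le hbdd hip him hp hm hx hy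
    have hLip := lipschitzOnWith_of_le_add_A2 hCa hA
    refine ⟨Mbar sf αp αm μp, _, hLip, fun s hs => ⟨hμm s hs, ?_⟩,
      (hLip.le_add_A2_iff_ae_derivWithin hsf.le hip him).1 hA⟩
    simpa [A2_self] using Mbar_le hbdd hp hm hs hs

/-- Feasibility criterion: the constraint set
`{ w Lipschitz : μ⁻ ≤ w ≤ μ⁺, α⁻ ≤ w' ≤ α⁺ a.e. }` is nonempty iff
`M̄(μ⁺) ≥ μ⁻` pointwise. -/
theorem stmt_17 (sf Ca : ℝ) (hsf : 0 < sf) (αp αm μm μp : ℝ → ℝ) (Kμ : NNReal)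
    (hip : IntervalIntegrable αp volume 0 sf)
    (him : IntervalIntegrable αm volume 0 sf)
    (hp : ∀ s ∈ Icc (0:ℝ) sf, 0 ≤ αp s)
    (hm : ∀ s ∈ Icc (0:ℝ) sf, αm s ≤ 0)
    (hCa : ∀ s ∈ Icc (0:ℝ) sf, |αp s| ≤ Ca ∧ |αm s| ≤ Ca)
    (hμm0 : ∀ s ∈ Icc (0:ℝ) sf, 0 ≤ μm s)
    (hμp : LipschitzOnWith Kμ μp (Icc (0:ℝ) sf)) :
    (∃ (w : ℝ → ℝ) (K : NNReal), LipschitzOnWith K w (Icc (0:ℝ) sf) ∧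
      (∀ s ∈ Icc (0:ℝ) sf, μm s ≤ w s ∧ w s ≤ μp s) ∧
      (∀ᵐ s ∂volume, s ∈ Icc (0:ℝ) sf →
        αm s ≤ derivWithin w (Icc (0:ℝ) sf) s ∧
        derivWithin w (Icc (0:ℝ) sf) s ≤ αp s))
    ↔ (∀ s ∈ Icc (0:ℝ) sf, μm s ≤ Mbar sf αp αm μp s) :=
  stmt_17_general sf Ca hsf αp αm μm μp Kμ hip him hp hm hCa hμp
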